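/- arXiv:1601.02989 — 3 statements merged into one kernel-verified Lean document; each statement's English description precedes it below -/
import Mathlib

section
/- For every natural number n ≥ 1 and complex x with |x| < 1, the hypergeometric function satisfies ₂F₁(3+n, 4; 3; x) = (3 + n x)/(3 (1-x)^{4+n}). -/
/-!
Since `b (b + 1)_k = (b + k) (b)_k` for the Pochhammer symbol, the quotient `(4)_k / (3)_k`
is `(3 + k) / 3`, and writing `(3 + k) (a)_k = a (a + 1)_k - (a - 3) (a)_k` with `a = 3 + n`
splits the series into two binomial series: `(a)_k / k!` is `C(k + a - 1, a - 1)`, the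
coefficient of `x^k` in `(1 - x)^(-a)`. Hence the sum is
`(a (1 - x)^(-a-1) - n (1 - x)^(-a)) / 3 = (3 + n x) / (3 (1 - x)^(4 + n))`.
-/

/-- The Pochhammer symbol (rising factorial) in `ℂ`. -/
noncomputable def poch (a : ℂ) (k : ℕ) : ℂ := ∏ i ∈ Finset.range k, (a + i)

lemma poch_succ (a : ℂ) (k : ℕ) : poch a (k + 1) = poch a k * (a + k) :=
  Finset.prod_range_succ _ _

lemma poch_succ' (a : ℂ) (k : ℕ) : poch a (k + 1) = a * poch (a + 1) k := by
  rw [poch, Finset.prod_range_succ', poch, mul_comm]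
  simp only [Nat.cast_add, Nat.cast_one, Nat.cast_zero, add_zero, add_assoc, add_comm (1 : ℂ)]

lemma mul_poch_add_one (a : ℂ) (k : ℕ) : a * poch (a + 1) k = (a + k) * poch a k := by
  rw [← poch_succ', poch_succ, mul_comm]

lemma poch_ne_zero {a : ℂ} (ha : ∀ i : ℕ, a + i ≠ 0) (k : ℕ) : poch a k ≠ 0 :=
  Finset.prod_ne_zero_iff.mpr fun i _ => ha i

lemma poch_natCast (m k : ℕ) : poch m k = m.ascFactorial k := by
  induction k with
  | zero => simp [poch]
  | succ k ih => rw [poch_succ, ih, Nat.ascFactorial_succ]; push_cast; ring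

lemma poch_natCast_add_one_div_factorial (m k : ℕ) :
    poch (m + 1) k / k.factorial = (k + m).choose m := by
  rw [← Nat.cast_add_one, poch_natCast, Nat.ascFactorial_eq_factorial_mul_choose,
    add_comm k m, Nat.choose_symm_add]
  push_cast
  field_simp [k.factorial_ne_zero]

lemma hasSum_poch_div_factorial_mul_geometric (m : ℕ) {x : ℂ} (hx : ‖x‖ < 1) :
    HasSum (fun k : ℕ => poch (m + 1) k / k.factorial * x ^ k) (1 / (1 - x) ^ (m + 1)) := by
  simpa only [poch_natCast_add_one_div_factorial] using
    hasSum_choose_mul_geometric_of_norm_lt_one m hx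

lemma poch_mul_poch_add_one_div (a : ℂ) {b : ℂ} (hb : ∀ i : ℕ, b + i ≠ 0) (k : ℕ) :
    poch a k * poch (b + 1) k / (k.factorial * poch b k)
      = (a * (poch (a + 1) k / k.factorial) - (a - b) * (poch a k / k.factorial)) / b := by
  have hb0 : b ≠ 0 := by simpa using hb 0
  have hbk := poch_ne_zero hb k
  have hk : (k.factorial : ℂ) ≠ 0 := by exact_mod_cast k.factorial_ne_zero
  field_simp
  linear_combination (poch a k) * mul_poch_add_one b k - (poch b k) * mul_poch_add_one a k

theorem hyp2F1_special_general (n : ℕ) (x : ℂ) (hx : ‖x‖ < 1) :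
    HasSum (fun k : ℕ =>
        poch (3 + n) k * poch 4 k / ((k.factorial : ℂ) * poch 3 k) * x ^ k)
      ((3 + (n : ℂ) * x) / (3 * (1 - x) ^ (4 + n))) := by
  have hsum := (((hasSum_poch_div_factorial_mul_geometric (n + 3) hx).mul_left (3 + n : ℂ)).sub
    ((hasSum_poch_div_factorial_mul_geometric (n + 2) hx).mul_left (n : ℂ))).div_const 3
  have hx1 : 1 - x ≠ 0 := by
    intro h
    simp [← sub_eq_zero.mp h] at hx
  have hvalue : (3 + (n : ℂ) * x) / (3 * (1 - x) ^ (4 + n))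
      = ((3 + n) * (1 / (1 - x) ^ (n + 3 + 1)) - n * (1 / (1 - x) ^ (n + 2 + 1))) / 3 := by
    rw [show 4 + n = n + 2 + 1 + 1 by omega, show n + 3 = n + 2 + 1 by omega]
    field_simp
    ring
  rw [hvalue]
  refine hsum.congr_fun fun k => ?_
  rw [show (4 : ℂ) = 3 + 1 by norm_num, poch_mul_poch_add_one_div _ (fun i => by norm_cast; omega)]
  push_cast
  ring_nf

theorem hyp2F1_special (n : ℕ) (hn : 1 ≤ n) (x : ℂ) (hx : ‖x‖ < 1) :
    HasSum (fun k : ℕ =>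
        poch (3 + n) k * poch 4 k / ((k.factorial : ℂ) * poch 3 k) * x ^ k)
      ((3 + (n : ℂ) * x) / (3 * (1 - x) ^ (4 + n))) :=
  hyp2F1_special_general n x hx
end

section
/- For positive real r and complex ν_1, …, ν_n in the open unit disk, the sum over all β = (β_1, …, β_n) ∈ ℕⁿ of (2/r)(β_1 + ⋯ + β_n + n + r/2) ∏_{j=1}^n (β_j + 1) ν_1^{β_1} ⋯ ν_n^{β_n} converges and equals ∏_{k=1}^n (1−ν_k)^{-2} + ∑_{k=1}^n 2(1+ν_k)/(r (1−ν_1)² ⋯ (1−ν_n)² (1−ν_k)). -/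
/-!
Since `∑ j, β j + n + r / 2 = r / 2 + ∑ k, (β k + 1)`, the summand is
`P β + (2 / r) ∑ k, (β k + 1) P β` with `P β = ∏ j, (β j + 1) ν j ^ β j`. The family `P` is a
product of absolutely convergent one-variable series, each summing to `(1 - ν j)⁻²`, so it sums to
the product of these. Weighting by `β k + 1` only changes the `k`-th factor, into
`∑ (m + 1)² x ^ m = (1 + x) / (1 - x)³`.
-/

open Finset Asymptotics Filter

theorem summable_norm_add_one_pow_mul_geometric {R : Type*} [NormedRing R] (j : ℕ) {x : R}
    (hx : ‖x‖ < 1) : Summable fun m : ℕ => ‖((m : R) + 1) ^ j * x ^ m‖ := by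
  have hu : (fun m : ℕ => (((m + 1) ^ j : ℕ) : ℝ)) =O[atTop] fun m => ((m ^ j : ℕ) : ℝ) := by
    push_cast
    refine ((isBigO_refl _ _).add (isLittleO_const_left.2 (Or.inr ?_)).isBigO).pow j
    exact tendsto_norm_atTop_atTop.comp tendsto_natCast_atTop_atTop
  simpa using summable_norm_mul_geometric_of_norm_lt_one hx hu

section Geometric

variable {𝕜 : Type*} [NormedField 𝕜] {x : 𝕜}

theorem hasSum_add_one_mul_geometric (hx : ‖x‖ < 1) :
    HasSum (fun m : ℕ => ((m : 𝕜) + 1) * x ^ m) ((1 - x) ^ 2)⁻¹ := by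
  simpa using hasSum_choose_mul_geometric_of_norm_lt_one 1 hx

theorem hasSum_add_one_sq_mul_geometric (hx : ‖x‖ < 1) :
    HasSum (fun m : ℕ => ((m : 𝕜) + 1) ^ 2 * x ^ m) ((1 + x) / (1 - x) ^ 3) := by
  have hx1 : 1 - x ≠ 0 := sub_ne_zero.2 (by rintro rfl; simp at hx)
  -- `(m + 1) ^ 2 = 2 * (m + 2).choose 2 - (m + 1)`
  have hchoose (m : ℕ) : ((m + 2).choose 2 : 𝕜) * 2 = ((m : 𝕜) + 1) * ((m : 𝕜) + 2) := by
    have h : (m + 2).choose 2 * 2 = (m + 1) * (m + 2) := by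
      rw [← Nat.choose_one_right (m + 1)]
      exact (Nat.add_one_mul_choose_eq (m + 1) 1).symm.trans (mul_comm _ _)
    simpa using congrArg (Nat.cast : ℕ → 𝕜) h
  have h2 := (hasSum_choose_mul_geometric_of_norm_lt_one 2 hx).mul_left 2
  convert! h2.sub (hasSum_add_one_mul_geometric hx) using 1
  · funext m
    linear_combination (-(x ^ m)) * hchoose m
  · field_simp
    ring

end Geometric

section PiProduct

variable {ι R κ : Type*} [NormedCommRing R] [CompleteSpace R]

theorem hasSum_fin_pi_prod_and_summable_norm {n : ℕ} {f : Fin n → κ → R} {a : Fin n → R}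
    (hf : ∀ i, HasSum (f i) (a i)) (hf' : ∀ i, Summable fun m => ‖f i m‖) :
    HasSum (fun β : Fin n → κ => ∏ i, f i (β i)) (∏ i, a i) ∧
      Summable fun β : Fin n → κ => ‖∏ i, f i (β i)‖ := by
  induction n with
  | zero => exact ⟨by simp, .of_finite⟩
  | succ n ih =>
    set g : (Fin n → κ) → R := fun β => ∏ i, f i.succ (β i)
    obtain ⟨htail, htail'⟩ : HasSum g (∏ i, a i.succ) ∧ Summable fun β => ‖g β‖ :=
      ih (fun i => hf i.succ) (fun i => hf' i.succ)
    let e : κ × (Fin n → κ) ≃ (Fin (n + 1) → κ) := Fin.consEquiv fun _ => κ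
    have hcons (p : κ × (Fin n → κ)) : ∏ i, f i (e p i) = f 0 p.1 * g p.2 := by
      simp [e, g, Fin.prod_univ_succ]
    constructor
    · refine e.hasSum_iff.mp ?_
      simp only [Function.comp_def, hcons]
      rw [Fin.prod_univ_succ]
      exact (hf 0).mul htail (summable_mul_of_summable_norm (hf' 0) htail')
    · refine e.summable_iff.mp ?_
      simpa only [Function.comp_def, hcons] using (hf' 0).mul_norm htail'

theorem hasSum_pi_prod [Fintype ι] {f : ι → κ → R} {a : ι → R}
    (hf : ∀ i, HasSum (f i) (a i)) (hf' : ∀ i, Summable fun m => ‖f i m‖) :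
    HasSum (fun β : ι → κ => ∏ i, f i (β i)) (∏ i, a i) := by
  let e := Fintype.equivFin ι
  have h := (hasSum_fin_pi_prod_and_summable_norm (f := fun j => f (e.symm j))
    (a := fun j => a (e.symm j)) (fun j => hf _) (fun j => hf' _)).1
  rw [e.symm.prod_comp a] at h
  refine ((e.arrowCongr (Equiv.refl κ)).symm.hasSum_iff).mp ?_
  convert h using 2 with γ
  simpa using e.prod_comp fun j => f (e.symm j) (γ j)

theorem hasSum_mul_pi_prod [Fintype ι] [DecidableEq ι] {f : ι → κ → R} {a : ι → R}
    (hf : ∀ i, HasSum (f i) (a i)) (hf' : ∀ i, Summable fun m => ‖f i m‖) (k : ι)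
    {w : κ → R} {b : R} (hw : HasSum (fun m => w m * f k m) b)
    (hw' : Summable fun m => ‖w m * f k m‖) :
    HasSum (fun β : ι → κ => w (β k) * ∏ i, f i (β i)) (∏ i, Function.update a k b i) := by
  have h := hasSum_pi_prod (f := Function.update f k fun m => w m * f k m)
    (a := Function.update a k b)
    (fun i => by rcases eq_or_ne i k with rfl | hi <;> simp [*])
    (fun i => by rcases eq_or_ne i k with rfl | hi <;> simp [*])
  convert h using 2 with β
  have hupd (i : ι) : Function.update f k (fun m => w m * f k m) i (β i) =
      Function.update (fun i => f i (β i)) k (w (β k) * f k (β k)) i := by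
    rcases eq_or_ne i k with rfl | hi <;> simp [*]
  rw [prod_congr rfl fun i _ => hupd i, prod_update_of_mem (mem_univ k),
    prod_eq_mul_prod_sdiff_singleton_of_mem (mem_univ k), mul_assoc]

end PiProduct

theorem hasSum_omega_kernel (n : ℕ) (r : ℝ) (hr : r > 0)
    (ν : Fin n → ℂ) (hν : ∀ k, ‖ν k‖ < 1) :
    HasSum (fun β : Fin n → ℕ =>
        (2 / (r : ℂ)) * ((∑ j, (β j : ℂ)) + n + (r : ℂ) / 2) *
          ∏ j, (((β j : ℂ) + 1) * ν j ^ β j))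
      ((∏ k, ((1 - ν k) ^ 2)⁻¹) +
        ∑ k, 2 * (1 + ν k) / ((r : ℂ) * (∏ j, (1 - ν j) ^ 2) * (1 - ν k))) := by
  classical
  have hr0 : (r : ℂ) ≠ 0 := Complex.ofReal_ne_zero.2 hr.ne'
  have hν1 (k : Fin n) : 1 - ν k ≠ 0 := sub_ne_zero.2 fun h => by simpa [← h] using hν k
  set f : Fin n → ℕ → ℂ := fun j m => ((m : ℂ) + 1) * ν j ^ m
  have hf (j : Fin n) : HasSum (f j) ((1 - ν j) ^ 2)⁻¹ := hasSum_add_one_mul_geometric (hν j)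
  have hf' (j : Fin n) : Summable fun m => ‖f j m‖ := by
    simpa only [f, pow_one] using summable_norm_add_one_pow_mul_geometric 1 (hν j)
  have hweighted (k : Fin n) : HasSum (fun β : Fin n → ℕ => ((β k : ℂ) + 1) * ∏ j, f j (β j))
      ((1 + ν k) / (1 - ν k) * ∏ j, ((1 - ν j) ^ 2)⁻¹) := by
    have h := hasSum_mul_pi_prod hf hf' k (w := fun m => (m : ℂ) + 1)
      (by simpa only [f, ← mul_assoc, ← sq] using hasSum_add_one_sq_mul_geometric (hν k))
      (by simpa only [f, ← mul_assoc, ← sq] using summable_norm_add_one_pow_mul_geometric 2 (hν k))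
    have hval : ∏ j, Function.update (fun j => ((1 - ν j) ^ 2)⁻¹) k ((1 + ν k) / (1 - ν k) ^ 3) j
        = (1 + ν k) / (1 - ν k) * ∏ j, ((1 - ν j) ^ 2)⁻¹ := by
      rw [prod_update_of_mem (mem_univ k), prod_eq_mul_prod_sdiff_singleton_of_mem (mem_univ k)]
      field_simp [hν1 k]
    rwa [hval] at h
  convert! (hasSum_pi_prod hf hf').add
    ((hasSum_sum fun k _ => hweighted k).mul_left (2 / (r : ℂ))) using 1
  · funext β
    rw [← sum_mul, sum_add_distrib, sum_const, card_univ, Fintype.card_fin]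
    field_simp
    ring
  · rw [mul_sum, prod_inv_distrib]
    congr 1
    refine sum_congr rfl fun k _ => ?_
    field_simp [hν1 k]
end

section
/- For every natural number n, the polynomial (3 + n x)/(6 (1−x)^{4+n}) in the variable x vanishes at x = −3/n (for n ≥ 1), and in particular there exist w, ξ in the open unit disk of ℂ with (3 + n·w·conj(ξ)) = 0, namely w = i√(3/n), ξ = −i√(3/n), whenever n ≥ 4. -/
/-! With `s = √(3/n)`, the points `w = i s` and `ξ = -i s` give `w * conj ξ = (i s)^2 = -3/n`, which is the
zero `x = -3/n` of the numerator `3 + n x`; they lie in the unit disk exactly when `3/n < 1`, i.e. `n ≥ 4`. -/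

open Complex ComplexConjugate

theorem add_mul_neg_div_self {K : Type*} [Field K] {a : K} (ha : a ≠ 0) (c : K) :
    c + a * (-c / a) = 0 := by
  rw [mul_div_cancel₀ _ ha, add_neg_cancel]

theorem norm_I_mul_sqrt_lt_one {r : ℝ} (hr : r < 1) : ‖I * (Real.sqrt r : ℂ)‖ < 1 := by
  rw [norm_mul, norm_I, one_mul, norm_real, Real.norm_of_nonneg (Real.sqrt_nonneg r)]
  exact (Real.sqrt_lt' one_pos).2 (by rwa [one_pow])

theorem I_mul_sqrt_mul_conj_neg_I_mul_sqrt {r : ℝ} (hr : 0 ≤ r) :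
    I * (Real.sqrt r : ℂ) * conj (-I * (Real.sqrt r : ℂ)) = -r := by
  have hsq : (Real.sqrt r : ℂ) ^ 2 = r := by exact_mod_cast Real.sq_sqrt hr
  simp only [map_mul, map_neg, conj_I, conj_ofReal, neg_neg]
  linear_combination I ^ 2 * hsq + r * I_sq

theorem kernel_zero_Dn (n : ℕ) (hn : 4 ≤ n) :
    ((3 + (n : ℂ) * (-3 / n)) / (6 * (1 - (-3 / n : ℂ)) ^ (4 + n)) = 0) ∧
      ∃ w ξ : ℂ, ‖w‖ < 1 ∧ ‖ξ‖ < 1 ∧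
        w = Complex.I * (Real.sqrt (3 / n) : ℂ) ∧
        ξ = -Complex.I * (Real.sqrt (3 / n) : ℂ) ∧
        3 + (n : ℂ) * (w * starRingEnd ℂ ξ) = 0 := by
  have hn0 : (n : ℂ) ≠ 0 := Nat.cast_ne_zero.mpr (by omega)
  have hr_lt : (3 / n : ℝ) < 1 := (div_lt_one (by positivity)).2 (by exact_mod_cast hn)
  refine ⟨by rw [add_mul_neg_div_self hn0, zero_div], _, _, norm_I_mul_sqrt_lt_one hr_lt, ?_,
    rfl, rfl, ?_⟩
  · simpa only [neg_mul, norm_neg] using norm_I_mul_sqrt_lt_one hr_lt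
  · rw [I_mul_sqrt_mul_conj_neg_I_mul_sqrt (by positivity)]
    push_cast
    rw [← neg_div]
    exact add_mul_neg_div_self hn0 3
end
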